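/- Let M be a simple matroid of rank k+1 (k ≥ 2) with a 2-colouring (R,B) such that every hyperplane of M contains an element of R. Let L be a line of M such that every rank-(k−1) flat of M skew to L contains an element of R. Then every hyperplane of the principal truncation of L in M contains an element of R. -/

import Mathlib

open Set
open scoped Classical

namespace MatroidPaper

variable {α : Type*}

/-- The rank of a set in a matroid: the supremum of cardinalities of independent subsets. -/
noncomputable def rkS (M : Matroid α) (X : Set α) : ℕ :=
  sSup {n | ∃ I, M.Indep I ∧ I ⊆ X ∧ I.ncard = n}

/-- The rank of a matroid. -/
noncomputable def rk (M : Matroid α) : ℕ := rkS M M.E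

/-- A hyperplane: a flat of rank `rk M - 1`. -/
def Hyp (M : Matroid α) (H : Set α) : Prop := M.IsFlat H ∧ rkS M H = rk M - 1

/-- Two sets are skew if the rank of their union is the sum of their ranks. -/
def SkewSets (M : Matroid α) (X Y : Set α) : Prop :=
  rkS M (X ∪ Y) = rkS M X + rkS M Y

/-- A simple matroid: every subset of the ground set with at most two elements is independent. -/
def SimpleM (M : Matroid α) : Prop := ∀ X ⊆ M.E, X.ncard ≤ 2 → M.Indep X

/-- A real-representable matroid. -/
def RealRep (M : Matroid α) : Prop :=
  ∃ (n : ℕ) (φ : α → (Fin n → ℝ)), ∀ I, I ⊆ M.E →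
    (M.Indep I ↔ LinearIndependent ℝ (fun x : I => φ x))

/-- A matroid is `k`-degenerate if it has rank at most one or its ground set is covered by
flats of rank at least two with `∑ (r(Fᵢ) - 1) ≤ k - 1`. -/
def Degen (M : Matroid α) (k : ℕ) : Prop :=
  rk M ≤ 1 ∨ ∃ (t : ℕ) (F : Fin t → Set α),
    (∀ i, M.IsFlat (F i) ∧ 2 ≤ rkS M (F i)) ∧
    M.E ⊆ ⋃ i, F i ∧ ∑ i, (rkS M (F i) - 1) ≤ k - 1

/-- A set `X` is `k`-degenerate in `M` if the restriction `M|X` is a `k`-degenerate matroid. -/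
def DegenSet (M : Matroid α) (X : Set α) (k : ℕ) : Prop := Degen (M.restrict X) k

/-- `N` is the (one-fold) principal truncation of `F` in `M`. -/
noncomputable def IsPT (M : Matroid α) (F : Set α) (N : Matroid α) : Prop :=
  N.E = M.E ∧ ∀ X ⊆ M.E,
    rkS N X = if F ⊆ M.closure X then rkS M X - 1 else rkS M X

/-- `N` is the complete principal truncation `M ÷ F` of `F` in `M`. -/
def IsCPT (M : Matroid α) (F : Set α) (N : Matroid α) : Prop :=
  N.E = M.E ∧ ∀ X ⊆ M.E,
    rkS N X = min (rkS M X + (rkS M F - 1)) (rkS M (X ∪ F)) - (rkS M F - 1)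

/-! A hyperplane `H` of the truncation `N` is a flat of `M`, because `r_N X` depends only on
`cl_M X`. If `L ⊆ cl_M H`, then `r_M H = r_N H + 1` and `H` is a hyperplane of `M`. Otherwise
`r_M H = r_N H = r M - 2`, and for `e ∈ L \ cl_M H` the line `L` is not spanned by `H + e` either
(else `r_N (H + e) = r_N H`, putting `e` in `cl_N H = H`); hence `r_M (H ∪ L) = r M` and `H` is
skew to `L`. -/

open Matroid

section Rank

variable {M : Matroid α} [M.RankFinite] {X Y : Set α} {e : α}

variable (M) in
lemma cast_rkS (X : Set α) : (rkS M X : ℕ∞) = M.eRk X := by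
  obtain ⟨I, hI⟩ := M.exists_isBasis' X
  have hIfin : I.Finite := hI.indep.finite
  have hgreatest : IsGreatest {n | ∃ J, M.Indep J ∧ J ⊆ X ∧ J.ncard = n} I.ncard := by
    refine ⟨⟨I, hI.indep, hI.subset, rfl⟩, ?_⟩
    rintro _ ⟨J, hJ, hJX, rfl⟩
    have := hJ.encard_le_eRk_of_subset hJX
    rw [← hI.encard_eq_eRk, ← hJ.finite.cast_ncard_eq, ← hIfin.cast_ncard_eq] at this
    exact_mod_cast this
  rw [rkS, hgreatest.csSup_eq, hIfin.cast_ncard_eq, hI.encard_eq_eRk]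

lemma rkS_mono (hXY : X ⊆ Y) : rkS M X ≤ rkS M Y := by
  have := M.eRk_mono hXY
  rwa [← cast_rkS, ← cast_rkS, Nat.cast_le] at this

variable (M) in
lemma rkS_le_rk (X : Set α) : rkS M X ≤ rk M := by
  have := M.eRk_le_eRank X
  rwa [← eRk_ground, ← cast_rkS, ← cast_rkS, Nat.cast_le] at this

variable (M) in
lemma rkS_closure (X : Set α) : rkS M (M.closure X) = rkS M X := by
  exact_mod_cast (cast_rkS M _).trans <| (M.eRk_closure_eq X).trans (cast_rkS M X).symm

lemma rkS_insert_of_notMem_closure (he : e ∈ M.E \ M.closure X) :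
    rkS M (insert e X) = rkS M X + 1 := by
  have := eRk_insert_eq_add_one he
  rw [← cast_rkS, ← cast_rkS] at this
  exact_mod_cast this

lemma mem_closure_of_rkS_insert_eq (he : e ∈ M.E) (h : rkS M (insert e X) = rkS M X) :
    e ∈ M.closure X := by
  by_contra hcl
  have := rkS_insert_of_notMem_closure ⟨he, hcl⟩
  omega

lemma closure_eq_closure_of_rkS_le (hXY : X ⊆ Y) (h : rkS M Y ≤ rkS M X) :
    M.closure X = M.closure Y :=
  (M.isRkFinite_set X).closure_eq_closure_of_subset_of_eRk_ge_eRk hXY <| by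
    rwa [← cast_rkS, ← cast_rkS, Nat.cast_le]

end Rank

namespace IsPT

variable {M N : Matroid α} {L H X Y : Set α} {e : α}

lemma rk_eq (hN : IsPT M L N) (hL : L ⊆ M.E) : rk N = rk M - 1 := by
  rw [rk, hN.1, hN.2 M.E Subset.rfl, if_pos (by rwa [M.closure_ground]), rk]

lemma rkS_eq_of_not_subset_closure (hN : IsPT M L N) (hL : L ⊆ M.E) (hH : Hyp N H)
    (hLH : ¬ L ⊆ M.closure H) : rkS M H = rk M - 2 := by
  have hHE : H ⊆ M.E := hN.1 ▸ hH.1.subset_ground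
  have hrkH := hN.2 H hHE
  rw [if_neg hLH, hH.2, hN.rk_eq hL] at hrkH
  omega

variable [M.Finite]

lemma finite (hN : IsPT M L N) : N.Finite :=
  ⟨hN.1 ▸ M.ground_finite⟩

lemma rkS_eq_of_closure_eq (hN : IsPT M L N) (hX : X ⊆ M.E) (hY : Y ⊆ M.E)
    (hXY : M.closure X = M.closure Y) : rkS N X = rkS N Y := by
  rw [hN.2 X hX, hN.2 Y hY, ← rkS_closure M X, ← rkS_closure M Y, hXY]

lemma isFlat (hN : IsPT M L N) (hH : N.IsFlat H) : M.IsFlat H := by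
  have := hN.finite
  have hHE : H ⊆ M.E := hN.1 ▸ hH.subset_ground
  refine isFlat_iff_closure_eq.2 <| (M.subset_closure H hHE).antisymm' fun e he ↦ ?_
  have heE : e ∈ M.E := M.closure_subset_ground H he
  have hrk : rkS N (insert e H) = rkS N H :=
    hN.rkS_eq_of_closure_eq (insert_subset heE hHE) hHE (M.closure_insert_eq_of_mem_closure he)
  exact hH.closure ▸ mem_closure_of_rkS_insert_eq (hN.1 ▸ heE) hrk

lemma not_subset_closure_insert (hN : IsPT M L N) (hH : N.IsFlat H)
    (hLH : ¬ L ⊆ M.closure H) (he : e ∈ M.E \ M.closure H) :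
    ¬ L ⊆ M.closure (insert e H) := by
  have := hN.finite
  have hHE : H ⊆ M.E := hN.1 ▸ hH.subset_ground
  intro hLe
  have hrk : rkS N (insert e H) = rkS N H := by
    rw [hN.2 _ (insert_subset he.1 hHE), hN.2 H hHE, if_pos hLe, if_neg hLH,
      rkS_insert_of_notMem_closure he, Nat.add_sub_cancel]
  have heH : e ∈ H := hH.closure ▸ mem_closure_of_rkS_insert_eq (hN.1 ▸ he.1) hrk
  exact he.2 (M.subset_closure H hHE heH)

lemma hyp_of_subset_closure (hN : IsPT M L N) (hH : Hyp N H) (hLH : L ⊆ M.closure H)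
    (hL : 2 ≤ rkS M L) : Hyp M H := by
  have hHE : H ⊆ M.E := hN.1 ▸ hH.1.subset_ground
  have hrkN := hN.rk_eq (hLH.trans (M.closure_subset_ground H))
  have hrkH : rkS N H = rkS M H - 1 := by rw [hN.2 H hHE, if_pos hLH]
  have hLH' : rkS M L ≤ rkS M H := rkS_closure M H ▸ rkS_mono hLH
  have hHM := rkS_le_rk M H
  have hHN := hH.2
  refine ⟨hN.isFlat hH.1, ?_⟩
  omega

lemma skewSets_of_not_subset_closure (hN : IsPT M L N) (hL : L ⊆ M.E) (hL2 : rkS M L = 2)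
    (hH : Hyp N H) (hLH : ¬ L ⊆ M.closure H) : SkewSets M H L := by
  have hHE : H ⊆ M.E := hN.1 ▸ hH.1.subset_ground
  obtain ⟨e, heL, heH⟩ := not_subset.1 hLH
  have he : e ∈ M.E \ M.closure H := ⟨hL heL, heH⟩
  have hsub : insert e H ⊆ H ∪ L := insert_subset (Or.inr heL) subset_union_left
  have hlt : rkS M (insert e H) < rkS M (H ∪ L) := by
    refine lt_of_not_ge fun hle ↦ hN.not_subset_closure_insert hH.1 hLH he ?_
    rw [closure_eq_closure_of_rkS_le hsub hle]
    exact subset_union_right.trans (M.subset_closure _ (union_subset hHE hL))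
  have hrke := rkS_insert_of_notMem_closure he
  have hrkHL := rkS_le_rk M (H ∪ L)
  have hrkL := rkS_le_rk M L
  have hrkH := hN.rkS_eq_of_not_subset_closure hL hH hLH
  rw [SkewSets]
  omega

end IsPT

theorem stmt9_general (k : ℕ) (M : Matroid α) [M.Finite]
    (hr : rk M = k + 1) (R : Set α)
    (hhyp : ∀ H, Hyp M H → (H ∩ R).Nonempty)
    (L : Set α) (hL : M.IsFlat L) (hL2 : rkS M L = 2)
    (hall : ∀ F, M.IsFlat F → rkS M F = k - 1 → SkewSets M F L → (F ∩ R).Nonempty)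
    (N : Matroid α) (hN : IsPT M L N) :
    ∀ H, Hyp N H → (H ∩ R).Nonempty := by
  intro H hH
  by_cases hLH : L ⊆ M.closure H
  · exact hhyp H (hN.hyp_of_subset_closure hH hLH (by omega))
  · refine hall H (hN.isFlat hH.1) ?_ (hN.skewSets_of_not_subset_closure hL.subset_ground hL2 hH hLH)
    rw [hN.rkS_eq_of_not_subset_closure hL.subset_ground hH hLH, hr]
    omega

/-- If every rank-`(k-1)` flat skew to `L` meets `R`, then every hyperplane of the principal
truncation of `L` meets `R`. -/
theorem stmt9 (k : ℕ) (hk : 2 ≤ k) (M : Matroid α) [M.Finite] (hs : SimpleM M)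
    (hr : rk M = k + 1) (R B : Set α) (hRB : R ∪ B = M.E) (hd : Disjoint R B)
    (hhyp : ∀ H, Hyp M H → (H ∩ R).Nonempty)
    (L : Set α) (hL : M.IsFlat L) (hL2 : rkS M L = 2)
    (hall : ∀ F, M.IsFlat F → rkS M F = k - 1 → SkewSets M F L → (F ∩ R).Nonempty)
    (N : Matroid α) (hN : IsPT M L N) :
    ∀ H, Hyp N H → (H ∩ R).Nonempty :=
  stmt9_general k M hr R hhyp L hL hL2 hall N hN

end MatroidPaper
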